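/- Let d > 1. For every operator O on ℂ^d ⊗ ℂ^d, the second Haar moment satisfies ∫_{U(d)} U^{⊗2} O (U^{⊗2})† dμ_H(U) = c_𝕀 · 𝕀 + c_𝔽 · 𝔽, where c_𝕀 = (Tr(O) − d⁻¹ Tr(𝔽 O)) / (d² − 1) and c_𝔽 = (Tr(𝔽 O) − d⁻¹ Tr(O)) / (d² − 1). -/
import Mathlib


open MeasureTheory Matrix
open scoped Kronecker

/-- The entrywise (Bochner) integral of a matrix-valued function. -/
noncomputable def matInt {G : Type*} [MeasurableSpace G] (μ : Measure G)
    {m n : Type*} (f : G → Matrix m n ℂ) : Matrix m n ℂ :=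
  Matrix.of fun i j => ∫ U, f U i j ∂μ

/-- The Borel σ-algebra on the unitary group `U(d)`. -/
noncomputable instance (d : ℕ) : MeasurableSpace (Matrix.unitaryGroup (Fin d) ℂ) :=
  borel _

/-- The Flip (SWAP) operator `𝔽` on `ℂ^d ⊗ ℂ^d`, with entries
`𝔽_{(i,j),(k,l)} = 1` if `i = l` and `j = k`, and `0` otherwise. -/
def flipOp (d : ℕ) : Matrix (Fin d × Fin d) (Fin d × Fin d) ℂ :=
  Matrix.of fun p q => if p.1 = q.2 ∧ p.2 = q.1 then 1 else 0

set_option linter.unusedSectionVars false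

instance (d : ℕ) : BorelSpace (Matrix.unitaryGroup (Fin d) ℂ) := ⟨rfl⟩

variable {d : ℕ}

lemma continuous_coe_ug : Continuous (fun U : Matrix.unitaryGroup (Fin d) ℂ =>
    (U : Matrix (Fin d) (Fin d) ℂ)) := continuous_subtype_val

instance : ContinuousMul (Matrix.unitaryGroup (Fin d) ℂ) := by
  constructor
  refine continuous_induced_rng.mpr ?_
  show Continuous (fun p : Matrix.unitaryGroup (Fin d) ℂ × Matrix.unitaryGroup (Fin d) ℂ =>
    (p.1 : Matrix (Fin d) (Fin d) ℂ) * (p.2 : Matrix (Fin d) (Fin d) ℂ))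
  exact (continuous_coe_ug.comp continuous_fst).matrix_mul
    (continuous_coe_ug.comp continuous_snd)

noncomputable def haarF (O : Matrix (Fin d × Fin d) (Fin d × Fin d) ℂ)
    (U : Matrix.unitaryGroup (Fin d) ℂ) : Matrix (Fin d × Fin d) (Fin d × Fin d) ℂ :=
  ((U : Matrix (Fin d) (Fin d) ℂ) ⊗ₖ (U : Matrix (Fin d) (Fin d) ℂ)) * O *
    ((U : Matrix (Fin d) (Fin d) ℂ) ⊗ₖ (U : Matrix (Fin d) (Fin d) ℂ))ᴴ

lemma conjTranspose_kronecker (A B : Matrix (Fin d) (Fin d) ℂ) :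
    (A ⊗ₖ B)ᴴ = Aᴴ ⊗ₖ Bᴴ := by
  ext p q
  simp [conjTranspose_apply, kronecker_apply, mul_comm]

lemma continuous_kron : Continuous (fun U : Matrix.unitaryGroup (Fin d) ℂ =>
    ((U : Matrix (Fin d) (Fin d) ℂ) ⊗ₖ (U : Matrix (Fin d) (Fin d) ℂ))) := by
  apply continuous_matrix
  rintro ⟨i, j⟩ ⟨k, l⟩
  exact (continuous_coe_ug.matrix_elem i k).mul (continuous_coe_ug.matrix_elem j l)

lemma haarF_continuous (O : Matrix (Fin d × Fin d) (Fin d × Fin d) ℂ) (p q) :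
    Continuous (fun U => haarF O U p q) := by
  apply Continuous.matrix_elem
  exact ((continuous_kron.matrix_mul continuous_const).matrix_mul
    continuous_kron.matrix_conjTranspose)

lemma unitary_entry_bound (U : Matrix.unitaryGroup (Fin d) ℂ) (i j : Fin d) :
    ‖(U : Matrix (Fin d) (Fin d) ℂ) i j‖ ≤ 1 :=
  entry_norm_bound_of_unitary U.2 i j

lemma haarF_bound (O : Matrix (Fin d × Fin d) (Fin d × Fin d) ℂ)
    (U : Matrix.unitaryGroup (Fin d) ℂ) (p q) :
    ‖haarF O U p q‖ ≤ ∑ r, ∑ s, ‖O r s‖ := by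
  set A := ((U : Matrix (Fin d) (Fin d) ℂ) ⊗ₖ (U : Matrix (Fin d) (Fin d) ℂ))
  have hA : ∀ a b, ‖A a b‖ ≤ 1 := by
    rintro ⟨i, j⟩ ⟨k, l⟩
    simp only [A, kronecker_apply, norm_mul]
    exact mul_le_one₀ (unitary_entry_bound U i k) (norm_nonneg _) (unitary_entry_bound U j l)
  have : haarF O U p q = ∑ r, ∑ s, A p r * O r s * star (A q s) := by
    simp [haarF, mul_apply, conjTranspose_apply, Finset.sum_mul, A]
    rw [Finset.sum_comm]
  rw [this]
  refine (norm_sum_le _ _).trans (Finset.sum_le_sum fun r _ => ?_)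
  refine (norm_sum_le _ _).trans (Finset.sum_le_sum fun s _ => ?_)
  rw [norm_mul, norm_mul, norm_star]
  calc ‖A p r‖ * ‖O r s‖ * ‖A q s‖ ≤ 1 * ‖O r s‖ * 1 := by
        gcongr; exacts [hA p r, hA q s]
    _ = ‖O r s‖ := by ring

lemma haarF_integrable (O : Matrix (Fin d × Fin d) (Fin d × Fin d) ℂ)
    (μ : Measure (Matrix.unitaryGroup (Fin d) ℂ)) [IsProbabilityMeasure μ] (p q) :
    Integrable (fun U => haarF O U p q) μ := by
  refine ⟨(haarF_continuous O p q).aestronglyMeasurable, ?_⟩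
  exact HasFiniteIntegral.of_bounded (ae_of_all _ fun U => haarF_bound O U p q)

section integ
variable (O : Matrix (Fin d × Fin d) (Fin d × Fin d) ℂ)
    (μ : Measure (Matrix.unitaryGroup (Fin d) ℂ)) [IsProbabilityMeasure μ]

lemma matInt_conj (hint : ∀ r s, Integrable (fun U => haarF O U r s) μ)
    (A B : Matrix (Fin d × Fin d) (Fin d × Fin d) ℂ) :
    A * matInt μ (haarF O) * B = matInt μ (fun U => A * haarF O U * B) := by
  ext p q
  have hrw : ∀ (X : Matrix (Fin d × Fin d) (Fin d × Fin d) ℂ),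
      (A * X * B) p q = ∑ s, ∑ r, A p r * X r s * B s q := by
    intro X
    simp [mul_apply, Finset.sum_mul]
  show (A * matInt μ (haarF O) * B) p q = ∫ U, (A * haarF O U * B) p q ∂μ
  rw [hrw]
  have : (fun U => (A * haarF O U * B) p q) =
      fun U => ∑ s, ∑ r, A p r * haarF O U r s * B s q := by
    funext U; exact hrw _
  rw [this]
  rw [integral_finset_sum _ (fun s _ => integrable_finset_sum _ fun r _ =>
    ((hint r s).const_mul _).mul_const _)]
  refine Finset.sum_congr rfl fun s _ => ?_
  rw [integral_finset_sum _ (fun r _ => ((hint r s).const_mul _).mul_const _)]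
  refine Finset.sum_congr rfl fun r _ => ?_
  rw [integral_mul_const, integral_const_mul]
  rfl
end integ

lemma coe_mul_ug (V U : Matrix.unitaryGroup (Fin d) ℂ) :
    ((V * U : Matrix.unitaryGroup (Fin d) ℂ) : Matrix (Fin d) (Fin d) ℂ) =
      (V : Matrix (Fin d) (Fin d) ℂ) * (U : Matrix (Fin d) (Fin d) ℂ) := rfl

lemma haarF_mul_left (O : Matrix (Fin d × Fin d) (Fin d × Fin d) ℂ)
    (V U : Matrix.unitaryGroup (Fin d) ℂ) :
    haarF O (V * U) =
      ((V : Matrix (Fin d) (Fin d) ℂ) ⊗ₖ (V : Matrix (Fin d) (Fin d) ℂ)) * haarF O U *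
      ((V : Matrix (Fin d) (Fin d) ℂ) ⊗ₖ (V : Matrix (Fin d) (Fin d) ℂ))ᴴ := by
  simp only [haarF, coe_mul_ug, mul_kronecker_mul, conjTranspose_mul]
  simp only [Matrix.mul_assoc]

lemma kron_unitary_left (V : Matrix.unitaryGroup (Fin d) ℂ) :
    ((V : Matrix (Fin d) (Fin d) ℂ) ⊗ₖ (V : Matrix (Fin d) (Fin d) ℂ))ᴴ *
      ((V : Matrix (Fin d) (Fin d) ℂ) ⊗ₖ (V : Matrix (Fin d) (Fin d) ℂ)) = 1 := by
  rw [conjTranspose_kronecker, ← mul_kronecker_mul, ← star_eq_conjTranspose,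
    Matrix.UnitaryGroup.star_mul_self, one_kronecker_one]

lemma kron_unitary_right (V : Matrix.unitaryGroup (Fin d) ℂ) :
    ((V : Matrix (Fin d) (Fin d) ℂ) ⊗ₖ (V : Matrix (Fin d) (Fin d) ℂ)) *
      ((V : Matrix (Fin d) (Fin d) ℂ) ⊗ₖ (V : Matrix (Fin d) (Fin d) ℂ))ᴴ = 1 := by
  rw [conjTranspose_kronecker, ← mul_kronecker_mul, ← star_eq_conjTranspose,
    Unitary.mul_star_self_of_mem V.2, one_kronecker_one]

section invar
variable (O : Matrix (Fin d × Fin d) (Fin d × Fin d) ℂ)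
    (μ : Measure (Matrix.unitaryGroup (Fin d) ℂ)) [IsProbabilityMeasure μ]
    [μ.IsMulLeftInvariant]

lemma key_inv (V : Matrix.unitaryGroup (Fin d) ℂ) :
    ((V : Matrix (Fin d) (Fin d) ℂ) ⊗ₖ (V : Matrix (Fin d) (Fin d) ℂ)) * matInt μ (haarF O) *
      ((V : Matrix (Fin d) (Fin d) ℂ) ⊗ₖ (V : Matrix (Fin d) (Fin d) ℂ))ᴴ = matInt μ (haarF O) := by
  rw [matInt_conj O μ (haarF_integrable O μ)]
  have h : (fun U => ((V : Matrix (Fin d) (Fin d) ℂ) ⊗ₖ (V : Matrix (Fin d) (Fin d) ℂ)) *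
      haarF O U * ((V : Matrix (Fin d) (Fin d) ℂ) ⊗ₖ (V : Matrix (Fin d) (Fin d) ℂ))ᴴ) =
      fun U => haarF O (V * U) := by
    funext U; exact (haarF_mul_left O V U).symm
  rw [h]
  ext p q
  show ∫ U, haarF O (V * U) p q ∂μ = ∫ U, haarF O U p q ∂μ
  exact integral_mul_left_eq_self (fun W => haarF O W p q) V

lemma key_comm (V : Matrix.unitaryGroup (Fin d) ℂ) :
    ((V : Matrix (Fin d) (Fin d) ℂ) ⊗ₖ (V : Matrix (Fin d) (Fin d) ℂ)) * matInt μ (haarF O) =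
      matInt μ (haarF O) * ((V : Matrix (Fin d) (Fin d) ℂ) ⊗ₖ (V : Matrix (Fin d) (Fin d) ℂ)) := by
  conv_lhs => rw [← Matrix.mul_one (((V : Matrix (Fin d) (Fin d) ℂ) ⊗ₖ
    (V : Matrix (Fin d) (Fin d) ℂ)) * matInt μ (haarF O)), ← kron_unitary_left V]
  rw [← Matrix.mul_assoc, key_inv O μ V]

end invar


lemma cancel_ne {c₁ c₂ x : ℂ} (h : c₁ * x = x * c₂) (hne : c₁ ≠ c₂) : x = 0 := by
  have h0 : (c₁ - c₂) * x = 0 := by linear_combination h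
  rcases mul_eq_zero.mp h0 with h' | h'
  · exact absurd (sub_eq_zero.mp h') hne
  · exact h'

lemma diag_mem (z : Fin d → ℂ) (hz : ∀ m, star (z m) * z m = 1) :
    Matrix.diagonal z ∈ Matrix.unitaryGroup (Fin d) ℂ := by
  rw [Matrix.mem_unitaryGroup_iff', Matrix.star_eq_conjTranspose, Matrix.diagonal_conjTranspose,
    Matrix.diagonal_mul_diagonal]
  ext a b
  rcases eq_or_ne a b with rfl | h
  · simp only [Matrix.diagonal_apply_eq, Matrix.one_apply_eq]
    exact hz a
  · simp [Matrix.diagonal_apply_ne _ h, Matrix.one_apply_ne h]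

def permU (σ : Equiv.Perm (Fin d)) : Matrix (Fin d) (Fin d) ℂ :=
  Matrix.of fun a b => if a = σ b then 1 else 0

lemma permU_mem (σ : Equiv.Perm (Fin d)) : permU σ ∈ Matrix.unitaryGroup (Fin d) ℂ := by
  rw [Matrix.mem_unitaryGroup_iff', Matrix.star_eq_conjTranspose]
  ext a b
  simp only [Matrix.mul_apply, Matrix.conjTranspose_apply, permU, Matrix.of_apply,
    Matrix.one_apply]
  rw [Finset.sum_congr rfl (fun c _ => (by split <;> simp :
      star (if c = σ a then (1:ℂ) else 0) * (if c = σ b then 1 else 0)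
        = if c = σ a then (if c = σ b then (1:ℂ) else 0) else 0))]
  rw [Finset.sum_ite_eq']
  simp [EmbeddingLike.apply_eq_iff_eq]

lemma exists_perm (i j i' j' : Fin d) (hij : i ≠ j) (h' : i' ≠ j') :
    ∃ σ : Equiv.Perm (Fin d), σ i = i' ∧ σ j = j' := by
  refine ⟨(Equiv.swap ((Equiv.swap i i') j) j') * (Equiv.swap i i'), ?_, ?_⟩
  · have h1 : (Equiv.swap i i') j ≠ i' := by
      intro h
      rw [Equiv.swap_apply_eq_iff, Equiv.swap_apply_right] at h
      exact hij h.symm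
    simp only [Equiv.Perm.mul_apply, Equiv.swap_apply_left]
    exact Equiv.swap_apply_of_ne_of_ne (Ne.symm h1) h'
  · simp only [Equiv.Perm.mul_apply, Equiv.swap_apply_left]


lemma permU_kron_mul (σ : Equiv.Perm (Fin d))
    (N : Matrix (Fin d × Fin d) (Fin d × Fin d) ℂ) (a b : Fin d) (q : Fin d × Fin d) :
    ((permU σ ⊗ₖ permU σ) * N) (σ a, σ b) q = N (a, b) q := by
  rw [Matrix.mul_apply, Fintype.sum_prod_type]
  simp only [Matrix.kroneckerMap_apply, permU, Matrix.of_apply,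
    EmbeddingLike.apply_eq_iff_eq, ite_mul, one_mul, zero_mul, mul_ite, mul_one, mul_zero]
  simp [Finset.sum_ite_eq, Finset.sum_ite_eq']

lemma mul_permU_kron (σ : Equiv.Perm (Fin d))
    (N : Matrix (Fin d × Fin d) (Fin d × Fin d) ℂ) (p : Fin d × Fin d) (k l : Fin d) :
    (N * (permU σ ⊗ₖ permU σ)) p (k, l) = N p (σ k, σ l) := by
  rw [Matrix.mul_apply, Fintype.sum_prod_type]
  simp only [Matrix.kroneckerMap_apply, permU, Matrix.of_apply, mul_ite, mul_one, mul_zero,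
    ite_mul, zero_mul, one_mul]
  simp [Finset.sum_ite_eq, Finset.sum_ite_eq']

section rel
variable (O : Matrix (Fin d × Fin d) (Fin d × Fin d) ℂ)
    (μ : Measure (Matrix.unitaryGroup (Fin d) ℂ)) [IsProbabilityMeasure μ]
    [μ.IsMulLeftInvariant]

lemma diag_rel (m : Fin d) (p q : Fin d × Fin d) :
    ((if p.1 = m then Complex.I else 1) * (if p.2 = m then Complex.I else 1)) *
        matInt μ (haarF O) p q
      = matInt μ (haarF O) p q *
        ((if q.1 = m then Complex.I else 1) * (if q.2 = m then Complex.I else 1)) := by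
  set z : Fin d → ℂ := fun n => if n = m then Complex.I else 1 with hzdef
  have hz : ∀ n, star (z n) * z n = 1 := by
    intro n; by_cases h : n = m <;> simp [hzdef, h]
  have h : (Matrix.diagonal z ⊗ₖ Matrix.diagonal z) * matInt μ (haarF O)
      = matInt μ (haarF O) * (Matrix.diagonal z ⊗ₖ Matrix.diagonal z) :=
    key_comm O μ ⟨Matrix.diagonal z, diag_mem z hz⟩
  rw [Matrix.diagonal_kronecker_diagonal] at h
  have h' := congrFun (congrFun h p) q
  rw [Matrix.diagonal_mul, Matrix.mul_diagonal] at h'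
  exact h'

lemma perm_rel (σ : Equiv.Perm (Fin d)) (i j k l : Fin d) :
    matInt μ (haarF O) (σ i, σ j) (σ k, σ l) = matInt μ (haarF O) (i, j) (k, l) := by
  have h : (permU σ ⊗ₖ permU σ) * matInt μ (haarF O)
      = matInt μ (haarF O) * (permU σ ⊗ₖ permU σ) :=
    key_comm O μ ⟨permU σ, permU_mem σ⟩
  have h' := congrFun (congrFun h (σ i, σ j)) (k, l)
  rw [permU_kron_mul, mul_permU_kron] at h'
  exact h'.symm

lemma M_zero (i j k l : Fin d) (h1 : ¬(i = k ∧ j = l)) (h2 : ¬(i = l ∧ j = k)) :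
    matInt μ (haarF O) (i, j) (k, l) = 0 := by
  by_cases hik : i = k
  · have hjl : j ≠ l := fun h => h1 ⟨hik, h⟩
    have hlj : l ≠ j := Ne.symm hjl
    refine cancel_ne (diag_rel O μ j (i, j) (k, l)) ?_
    subst hik
    by_cases hij : i = j
    · subst hij
      simp only [if_pos rfl, if_neg hlj]
      norm_num [Complex.ext_iff]
    · simp only [if_pos rfl, if_neg hij, if_neg hlj]
      norm_num [Complex.ext_iff]
  · by_cases hil : i = l
    · have hjk : j ≠ k := fun h => h2 ⟨hil, h⟩
      have hkj : k ≠ j := Ne.symm hjk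
      refine cancel_ne (diag_rel O μ j (i, j) (k, l)) ?_
      subst hil
      by_cases hij : i = j
      · subst hij
        simp only [if_pos rfl, if_neg hkj]
        norm_num [Complex.ext_iff]
      · simp only [if_pos rfl, if_neg hij, if_neg hkj]
        norm_num [Complex.ext_iff]
    · have hki : k ≠ i := fun h => hik h.symm
      have hli : l ≠ i := fun h => hil h.symm
      refine cancel_ne (diag_rel O μ i (i, j) (k, l)) ?_
      by_cases hji : j = i
      · simp only [if_pos rfl, if_pos hji, if_neg hki, if_neg hli]
        norm_num [Complex.ext_iff]
      · simp only [if_pos rfl, if_neg hji, if_neg hki, if_neg hli]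
        norm_num [Complex.ext_iff]
end rel


noncomputable def rotR (d : ℕ) : Fin d → Fin d → ℝ := fun a b =>
  if a.val = 0 ∧ b.val = 0 then (Real.sqrt 2)⁻¹
  else if a.val = 0 ∧ b.val = 1 then (Real.sqrt 2)⁻¹
  else if a.val = 1 ∧ b.val = 0 then (Real.sqrt 2)⁻¹
  else if a.val = 1 ∧ b.val = 1 then -(Real.sqrt 2)⁻¹
  else if a = b then 1 else 0

lemma sqrt2_sq : (Real.sqrt 2)⁻¹ * (Real.sqrt 2)⁻¹ = 2⁻¹ := by
  rw [← mul_inv, Real.mul_self_sqrt (by norm_num)]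

lemma rotR_row_single (a : Fin d) (ha : 2 ≤ a.val) (x : Fin d) :
    rotR d a x = if a = x then 1 else 0 := by
  unfold rotR
  rw [if_neg (by omega), if_neg (by omega), if_neg (by omega), if_neg (by omega)]

lemma rotR_col_single (b : Fin d) (hb : 2 ≤ b.val) (x : Fin d) :
    rotR d x b = if x = b then 1 else 0 := by
  unfold rotR
  rw [if_neg (by omega), if_neg (by omega), if_neg (by omega), if_neg (by omega)]

lemma rotR_orth (hd : 1 < d) (a b : Fin d) : ∑ x, rotR d a x * rotR d b x = if a = b then 1 else 0 := by
  by_cases ha : 2 ≤ a.val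
  · rw [Finset.sum_congr rfl fun x _ => by rw [rotR_row_single a ha x, ite_mul, one_mul, zero_mul]]
    rw [Finset.sum_ite_eq]
    simp only [Finset.mem_univ, if_true]
    by_cases hb : 2 ≤ b.val
    · rw [rotR_row_single b hb a]
      by_cases hab : a = b
      · simp [hab]
      · rw [if_neg (Ne.symm hab), if_neg hab]
    · have hab : a ≠ b := by intro h; rw [h] at ha; omega
      rw [if_neg hab]
      unfold rotR
      rw [if_neg (by omega), if_neg (by omega), if_neg (by omega), if_neg (by omega),
        if_neg (Ne.symm hab)]
  · by_cases hb : 2 ≤ b.val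
    · rw [Finset.sum_congr rfl fun x _ => by
        rw [rotR_row_single b hb x, mul_ite, mul_one, mul_zero]]
      rw [Finset.sum_ite_eq]
      simp only [Finset.mem_univ, if_true]
      have hab : a ≠ b := by intro h; rw [h] at ha; exact ha hb
      rw [if_neg hab]
      unfold rotR
      rw [if_neg (by omega), if_neg (by omega), if_neg (by omega), if_neg (by omega),
        if_neg hab]
    · obtain ⟨x0, hx0⟩ : ∃ x : Fin d, x.val = 0 := ⟨⟨0, by omega⟩, rfl⟩
      obtain ⟨x1, hx1⟩ : ∃ x : Fin d, x.val = 1 := ⟨⟨1, hd⟩, rfl⟩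
      have hne : x0 ≠ x1 := fun h => by rw [h, hx1] at hx0; exact one_ne_zero hx0
      have key : ∀ x : Fin d, rotR d a x * rotR d b x =
          (if x = x0 then rotR d a x0 * rotR d b x0 else 0) +
          (if x = x1 then rotR d a x1 * rotR d b x1 else 0) := by
        intro x
        by_cases h0 : x = x0
        · subst h0; rw [if_pos rfl, if_neg hne, add_zero]
        · by_cases h1 : x = x1
          · subst h1; rw [if_neg (fun h => h0 h), if_pos rfl, zero_add]
          · have hx2 : 2 ≤ x.val := by
              have e0 : x.val ≠ 0 := fun h => h0 (Fin.val_injective (by rw [h, hx0]))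
              have e1 : x.val ≠ 1 := fun h => h1 (Fin.val_injective (by rw [h, hx1]))
              omega
            rw [rotR_col_single x hx2 a, if_neg (fun h => by rw [h] at ha; exact ha hx2),
              zero_mul, if_neg h0, if_neg h1, add_zero]
      rw [Finset.sum_congr rfl (fun x _ => key x), Finset.sum_add_distrib,
        Finset.sum_ite_eq', Finset.sum_ite_eq']
      simp only [Finset.mem_univ, if_true]
      have ha' : a = x0 ∨ a = x1 := by
        have h01 : a.val = 0 ∨ a.val = 1 := by omega
        rcases h01 with h | h
        · exact Or.inl (Fin.val_injective (by rw [h, hx0]))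
        · exact Or.inr (Fin.val_injective (by rw [h, hx1]))
      have hb' : b = x0 ∨ b = x1 := by
        have h01 : b.val = 0 ∨ b.val = 1 := by omega
        rcases h01 with h | h
        · exact Or.inl (Fin.val_injective (by rw [h, hx0]))
        · exact Or.inr (Fin.val_injective (by rw [h, hx1]))
      have v00 : rotR d x0 x0 = (Real.sqrt 2)⁻¹ := by rw [rotR]; simp [hx0]
      have v01 : rotR d x0 x1 = (Real.sqrt 2)⁻¹ := by rw [rotR]; simp [hx0, hx1]
      have v10 : rotR d x1 x0 = (Real.sqrt 2)⁻¹ := by rw [rotR]; simp [hx0, hx1]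
      have v11 : rotR d x1 x1 = -(Real.sqrt 2)⁻¹ := by rw [rotR]; simp [hx1]
      rcases ha' with rfl | rfl <;> rcases hb' with rfl | rfl
      · rw [if_pos rfl, v00, v01]; linear_combination 2 * sqrt2_sq
      · rw [if_neg hne, v00, v01, v10, v11]; ring
      · rw [if_neg (Ne.symm hne), v00, v01, v10, v11]; ring
      · rw [if_pos rfl, v10, v11]; linear_combination 2 * sqrt2_sq

noncomputable def rotV (d : ℕ) : Matrix (Fin d) (Fin d) ℂ :=
  Matrix.of fun a b => ((rotR d a b : ℝ) : ℂ)

lemma rotV_mem (hd : 1 < d) : rotV d ∈ Matrix.unitaryGroup (Fin d) ℂ := by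
  rw [Matrix.mem_unitaryGroup_iff, Matrix.star_eq_conjTranspose]
  ext a b
  rw [Matrix.mul_apply]
  have key : ∀ x, rotV d a x * (rotV d)ᴴ x b = ((rotR d a x * rotR d b x : ℝ) : ℂ) := by
    intro x
    rw [Matrix.conjTranspose_apply, rotV]
    simp only [Matrix.of_apply, Complex.star_def, Complex.conj_ofReal, Complex.ofReal_mul]
  rw [Finset.sum_congr rfl fun x _ => key x, ← Complex.ofReal_sum]
  rw [show (∑ x, rotR d a x * rotR d b x) = if a = b then 1 else 0 from rotR_orth hd a b]
  by_cases hab : a = b <;> simp [hab, Matrix.one_apply]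

lemma rotR00 (x0 : Fin d) (h0 : x0.val = 0) : rotR d x0 x0 = (Real.sqrt 2)⁻¹ := by
  rw [rotR]; simp [h0]

lemma rotR01 (x0 x1 : Fin d) (h0 : x0.val = 0) (h1 : x1.val = 1) :
    rotR d x0 x1 = (Real.sqrt 2)⁻¹ := by
  rw [rotR]; simp [h0, h1]

lemma sum_one_pt {g : Fin d × Fin d → ℂ} (t : Fin d × Fin d)
    (h0 : ∀ r, r ≠ t → g r = 0) : ∑ r, g r = g t :=
  Finset.sum_eq_single t (fun b _ hb => h0 b hb) (fun h => absurd (Finset.mem_univ t) h)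

lemma sum_two_pts {g : Fin d × Fin d → ℂ} (t1 t2 : Fin d × Fin d) (h12 : t1 ≠ t2)
    (h0 : ∀ r, r ≠ t1 → r ≠ t2 → g r = 0) : ∑ r, g r = g t1 + g t2 := by
  have key : ∀ r, g r = (if r = t1 then g t1 else 0) + (if r = t2 then g t2 else 0) := by
    intro r
    by_cases h1 : r = t1
    · subst h1; rw [if_pos rfl, if_neg h12, add_zero]
    · by_cases h2 : r = t2
      · subst h2; rw [if_neg h1, if_pos rfl, zero_add]
      · rw [if_neg h1, if_neg h2, add_zero, h0 r h1 h2]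
  rw [Finset.sum_congr rfl fun r _ => key r, Finset.sum_add_distrib,
    Finset.sum_ite_eq', Finset.sum_ite_eq']
  simp only [Finset.mem_univ, if_true]

section gamma
variable (O : Matrix (Fin d × Fin d) (Fin d × Fin d) ℂ)
    (μ : Measure (Matrix.unitaryGroup (Fin d) ℂ)) [IsProbabilityMeasure μ]
    [μ.IsMulLeftInvariant]

lemma gamma_rel (hd : 1 < d) (x0 x1 : Fin d) (h0 : x0.val = 0) (h1 : x1.val = 1) :
    matInt μ (haarF O) (x0, x0) (x0, x0) =
      matInt μ (haarF O) (x0, x1) (x0, x1) + matInt μ (haarF O) (x0, x1) (x1, x0) := by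
  have hne : x0 ≠ x1 := fun h => by rw [h, h1] at h0; exact one_ne_zero h0
  have h : (rotV d ⊗ₖ rotV d) * matInt μ (haarF O)
      = matInt μ (haarF O) * (rotV d ⊗ₖ rotV d) :=
    key_comm O μ ⟨rotV d, rotV_mem hd⟩
  have h' := congrFun (congrFun h (x0, x0)) (x0, x1)
  rw [Matrix.mul_apply, Matrix.mul_apply] at h'
  rw [sum_two_pts (x0, x1) (x1, x0)
      (by simp [Prod.ext_iff]; intro h; exact absurd h hne)
      (fun r hr1 hr2 => by
        rw [M_zero O μ r.1 r.2 x0 x1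
          (fun hc => hr1 (Prod.ext hc.1 hc.2))
          (fun hc => hr2 (Prod.ext hc.1 hc.2)), mul_zero])] at h'
  rw [sum_one_pt (x0, x0)
      (fun s hs => by
        rw [M_zero O μ x0 x0 s.1 s.2
          (fun hc => hs (Prod.ext hc.1.symm hc.2.symm))
          (fun hc => hs (Prod.ext hc.2.symm hc.1.symm)), zero_mul])] at h'
  have hsw : matInt μ (haarF O) (x1, x0) (x0, x1) = matInt μ (haarF O) (x0, x1) (x1, x0) := by
    have := perm_rel O μ (Equiv.swap x0 x1) x0 x1 x1 x0
    rwa [Equiv.swap_apply_left, Equiv.swap_apply_right] at this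
  rw [hsw] at h'
  set c : ℂ := (((Real.sqrt 2)⁻¹ : ℝ) : ℂ) with hc
  have hcne : c ≠ 0 := by
    rw [hc]
    simp only [ne_eq, Complex.ofReal_eq_zero, inv_eq_zero]
    positivity
  simp only [Matrix.kroneckerMap_apply, rotV, Matrix.of_apply] at h'
  rw [rotR00 x0 h0, rotR01 x0 x1 h0 h1] at h'
  have ht : c * c ≠ 0 := mul_ne_zero hcne hcne
  refine (mul_left_cancel₀ ht ?_).symm
  rw [hc]
  linear_combination h'
end gamma

lemma flip_mul_apply (N : Matrix (Fin d × Fin d) (Fin d × Fin d) ℂ) (p q : Fin d × Fin d) :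
    (flipOp d * N) p q = N (p.2, p.1) q := by
  rw [Matrix.mul_apply, Finset.sum_eq_single ((p.2, p.1) : Fin d × Fin d)]
  · simp [flipOp]
  · rintro ⟨r1, r2⟩ _ hr
    simp only [flipOp, Matrix.of_apply]
    rw [if_neg, zero_mul]
    rintro ⟨hh1, hh2⟩
    exact hr (Prod.ext hh2.symm hh1.symm)
  · intro h; exact absurd (Finset.mem_univ _) h

lemma mul_flip_apply (N : Matrix (Fin d × Fin d) (Fin d × Fin d) ℂ) (p q : Fin d × Fin d) :
    (N * flipOp d) p q = N p (q.2, q.1) := by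
  rw [Matrix.mul_apply, Finset.sum_eq_single ((q.2, q.1) : Fin d × Fin d)]
  · simp [flipOp]
  · rintro ⟨r1, r2⟩ _ hr
    simp only [flipOp, Matrix.of_apply]
    rw [if_neg, mul_zero]
    rintro ⟨hh1, hh2⟩
    exact hr (Prod.ext hh1 hh2)
  · intro h; exact absurd (Finset.mem_univ _) h

lemma flip_mul_flip : flipOp d * flipOp d = 1 := by
  ext p q
  rw [flip_mul_apply]
  simp only [flipOp, Matrix.of_apply, Matrix.one_apply, Prod.ext_iff]
  by_cases h : p = q
  · subst h; simp
  · rw [if_neg, if_neg (fun hc => h (Prod.ext hc.1 hc.2))]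
    rintro ⟨hh1, hh2⟩
    exact h (Prod.ext hh2 hh1)

lemma flip_kron (A B : Matrix (Fin d) (Fin d) ℂ) :
    flipOp d * (A ⊗ₖ B) = (B ⊗ₖ A) * flipOp d := by
  ext p q
  rw [flip_mul_apply, mul_flip_apply]
  simp [Matrix.kroneckerMap_apply, mul_comm]

lemma trace_flip : (flipOp d).trace = (d : ℂ) := by
  rw [Matrix.trace]
  have key : ∀ p : Fin d × Fin d, (flipOp d).diag p = if p.1 = p.2 then (1:ℂ) else 0 := by
    rintro ⟨i, j⟩
    by_cases h : i = j
    · subst h; simp [flipOp, Matrix.diag]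
    · simp [flipOp, Matrix.diag, h, Ne.symm h]
  rw [Finset.sum_congr rfl fun p _ => key p, Fintype.sum_prod_type]
  simp [Finset.sum_ite_eq]

section traces
variable (O : Matrix (Fin d × Fin d) (Fin d × Fin d) ℂ)
    (μ : Measure (Matrix.unitaryGroup (Fin d) ℂ)) [IsProbabilityMeasure μ]
    [μ.IsMulLeftInvariant]

lemma haarF_trace (U : Matrix.unitaryGroup (Fin d) ℂ) : (haarF O U).trace = O.trace := by
  unfold haarF
  rw [Matrix.trace_mul_cycle, kron_unitary_left, Matrix.one_mul]

lemma haarF_flip_trace (U : Matrix.unitaryGroup (Fin d) ℂ) :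
    (flipOp d * haarF O U).trace = (flipOp d * O).trace := by
  unfold haarF
  rw [← Matrix.mul_assoc, ← Matrix.mul_assoc, flip_kron, Matrix.trace_mul_cycle,
    ← Matrix.mul_assoc, kron_unitary_left, Matrix.one_mul]

lemma M_trace : (matInt μ (haarF O)).trace = O.trace := by
  rw [Matrix.trace]
  have : ∀ p : Fin d × Fin d, (matInt μ (haarF O)).diag p = ∫ U, haarF O U p p ∂μ :=
    fun p => rfl
  rw [Finset.sum_congr rfl fun p _ => this p,
    ← integral_finset_sum _ (fun p _ => haarF_integrable O μ p p)]
  have h2 : ∀ U : Matrix.unitaryGroup (Fin d) ℂ,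
      (∑ p : Fin d × Fin d, haarF O U p p) = O.trace := fun U => haarF_trace O U
  rw [integral_congr_ae (ae_of_all _ h2)]
  simp

lemma M_flip_trace : (flipOp d * matInt μ (haarF O)).trace = (flipOp d * O).trace := by
  rw [Matrix.trace]
  have : ∀ p : Fin d × Fin d, (flipOp d * matInt μ (haarF O)).diag p
      = ∫ U, haarF O U (p.2, p.1) p ∂μ := fun p => by
    show (flipOp d * matInt μ (haarF O)) p p = _
    rw [flip_mul_apply]
    rfl
  rw [Finset.sum_congr rfl fun p _ => this p,
    ← integral_finset_sum _ (fun p _ => haarF_integrable O μ _ _)]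
  have h2 : ∀ U : Matrix.unitaryGroup (Fin d) ℂ,
      (∑ p : Fin d × Fin d, haarF O U (p.2, p.1) p) = (flipOp d * O).trace := by
    intro U
    rw [← haarF_flip_trace O U, Matrix.trace]
    exact Finset.sum_congr rfl fun p _ => (flip_mul_apply (haarF O U) p p).symm
  rw [integral_congr_ae (ae_of_all _ h2)]
  simp

lemma M_struct (hd : 1 < d) (x0 x1 : Fin d) (h0 : x0.val = 0) (h1 : x1.val = 1) :
    matInt μ (haarF O) = matInt μ (haarF O) (x0, x1) (x0, x1) • 1 +
      matInt μ (haarF O) (x0, x1) (x1, x0) • flipOp d := by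
  have hne01 : x0 ≠ x1 := fun h => by rw [h, h1] at h0; exact one_ne_zero h0
  ext ⟨i, j⟩ ⟨k, l⟩
  simp only [Matrix.add_apply, Matrix.smul_apply, Matrix.one_apply, flipOp, Matrix.of_apply,
    smul_eq_mul]
  by_cases hA : i = k ∧ j = l
  · obtain ⟨hik, hjl⟩ := hA
    subst hik; subst hjl
    by_cases hB : i = j
    · subst hB
      have hswap : (Equiv.swap x0 i) x0 = i := Equiv.swap_apply_left x0 i
      have hperm := perm_rel O μ (Equiv.swap x0 i) x0 x0 x0 x0
      rw [hswap] at hperm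
      rw [hperm, gamma_rel O μ hd x0 x1 h0 h1]
      simp
    · obtain ⟨σ, hσ0, hσ1⟩ := exists_perm x0 x1 i j hne01 hB
      have hperm := perm_rel O μ σ x0 x1 x0 x1
      rw [hσ0, hσ1] at hperm
      rw [hperm]
      rw [if_pos rfl, if_neg (fun hc => hB hc.1)]
      ring
  · by_cases hB : i = l ∧ j = k
    · obtain ⟨hil, hjk⟩ := hB
      subst hil; subst hjk
      have hij : i ≠ j := fun h => hA ⟨h, h.symm⟩
      obtain ⟨σ, hσ0, hσ1⟩ := exists_perm x0 x1 i j hne01 hij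
      have hperm := perm_rel O μ σ x0 x1 x1 x0
      rw [hσ0, hσ1] at hperm
      rw [hperm]
      rw [if_neg (fun hc : (i, j) = (j, i) => hij (congrArg Prod.fst hc)),
        if_pos ⟨rfl, rfl⟩]
      ring
    · rw [M_zero O μ i j k l (fun hc => hA hc) (fun hc => hB hc)]
      rw [if_neg (fun hc : (i, j) = (k, l) =>
        hA ⟨congrArg Prod.fst hc, congrArg Prod.snd hc⟩), if_neg (fun hc => hB ⟨hc.1, hc.2⟩)]
      ring
end traces

/-- Second Haar moment: for `d > 1` and every operator `O` on
`ℂ^d ⊗ ℂ^d`, `∫ U^{⊗2} O (U^{⊗2})† dμ_H(U) = c_𝕀 𝕀 + c_𝔽 𝔽` with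
`c_𝕀 = (Tr O − d⁻¹ Tr(𝔽O))/(d²−1)` and `c_𝔽 = (Tr(𝔽O) − d⁻¹ Tr O)/(d²−1)`. -/
theorem haar_second_moment {d : ℕ} (hd : 1 < d)
    (μ : Measure (Matrix.unitaryGroup (Fin d) ℂ)) [IsProbabilityMeasure μ]
    [μ.IsMulLeftInvariant] [μ.IsMulRightInvariant]
    (O : Matrix (Fin d × Fin d) (Fin d × Fin d) ℂ) :
    matInt μ (fun U => ((U : Matrix (Fin d) (Fin d) ℂ) ⊗ₖ (U : Matrix (Fin d) (Fin d) ℂ)) * O *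
        ((U : Matrix (Fin d) (Fin d) ℂ) ⊗ₖ (U : Matrix (Fin d) (Fin d) ℂ))ᴴ) =
      ((O.trace - (d : ℂ)⁻¹ * (flipOp d * O).trace) / ((d : ℂ) ^ 2 - 1)) •
          (1 : Matrix (Fin d × Fin d) (Fin d × Fin d) ℂ) +
        (((flipOp d * O).trace - (d : ℂ)⁻¹ * O.trace) / ((d : ℂ) ^ 2 - 1)) • flipOp d := by
  obtain ⟨x0, h0⟩ : ∃ x : Fin d, x.val = 0 := ⟨⟨0, by omega⟩, rfl⟩
  obtain ⟨x1, h1⟩ : ∃ x : Fin d, x.val = 1 := ⟨⟨1, hd⟩, rfl⟩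
  show matInt μ (haarF O) = _
  set α := matInt μ (haarF O) (x0, x1) (x0, x1) with hα
  set β := matInt μ (haarF O) (x0, x1) (x1, x0) with hβ
  have hstruct := M_struct O μ hd x0 x1 h0 h1
  have hdne : (d : ℂ) ≠ 0 := Nat.cast_ne_zero.mpr (by omega)
  have hd2 : ((d : ℂ) ^ 2 - 1) ≠ 0 := by
    intro h
    have h' : ((d ^ 2 : ℕ) : ℂ) = ((1 : ℕ) : ℂ) := by push_cast; linear_combination h
    have := Nat.cast_injective h'
    nlinarith [this, hd]
  have ht1 : O.trace = α * (d : ℂ) ^ 2 + β * d := by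
    rw [← M_trace O μ, hstruct]
    rw [Matrix.trace_add, Matrix.trace_smul, Matrix.trace_smul, Matrix.trace_one, trace_flip]
    simp only [smul_eq_mul]
    rw [Fintype.card_prod, Fintype.card_fin]
    push_cast
    ring
  have ht2 : (flipOp d * O).trace = α * d + β * (d : ℂ) ^ 2 := by
    rw [← M_flip_trace O μ, hstruct]
    rw [Matrix.mul_add, Matrix.mul_smul, Matrix.mul_smul, Matrix.mul_one, flip_mul_flip]
    rw [Matrix.trace_add, Matrix.trace_smul, Matrix.trace_smul, Matrix.trace_one, trace_flip]
    simp only [smul_eq_mul]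
    rw [Fintype.card_prod, Fintype.card_fin]
    push_cast
    ring
  rw [ht1, ht2]
  have e1 : (α * (d : ℂ) ^ 2 + β * d - (d : ℂ)⁻¹ * (α * d + β * (d : ℂ) ^ 2)) /
      ((d : ℂ) ^ 2 - 1) = α := by
    field_simp
    ring
  have e2 : (α * (d : ℂ) + β * (d : ℂ) ^ 2 - (d : ℂ)⁻¹ * (α * (d : ℂ) ^ 2 + β * d)) /
      ((d : ℂ) ^ 2 - 1) = β := by
    field_simp
    ring
  rw [e1, e2]
  exact hstruct
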